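/- If f : X → X is a cw-expansive homeomorphism with cw-expansivity constant 2ε, then for every x ∈ X the stable continuum C^s_ε(x) is contained in the stable set W^s(x) and the unstable continuum C^u_ε(x) is contained in the unstable set W^u(x); consequently C^s_ε(x) ⊆ V^s_ε(x) and C^u_ε(x) ⊆ V^u_ε(x). -/

import Mathlib

open Topology Filter Metric TopologicalSpace

namespace LS

variable {X Y : Type*} [MetricSpace X] [MetricSpace Y]

/-- finite forward iterates of a homeomorphism -/
def hpowAux (f : X ≃ₜ X) : ℕ → X ≃ₜ X
  | 0 => Homeomorph.refl X
  | n+1 => (hpowAux f n).trans f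

/-- `ℤ`-iterates of a homeomorphism: `hpow f k` is the `k`-th iterate `f^k`. -/
def hpow (f : X ≃ₜ X) : ℤ → X ≃ₜ X
  | Int.ofNat n => hpowAux f n
  | Int.negSucc n => (hpowAux f (n+1)).symm

/-- the `ℤ`-iteration map of `f` -/
def F (f : X ≃ₜ X) : ℤ → X → X := fun k => hpow f k

/-- δ-limit-pseudo-orbit for a system given by its iterate family `T` -/
def IsLimitPseudoOrbit (T : ℤ → Y → Y) (δ : ℝ) (x : ℤ → Y) : Prop :=
  (∀ k : ℤ, dist (T 1 (x k)) (x (k+1)) ≤ δ) ∧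
  Tendsto (fun k : ℤ => dist (T 1 (x k)) (x (k+1))) (cocompact ℤ) (𝓝 0)

/-- `z` ε-limit-shadows the sequence `x` -/
def LimitShadows (T : ℤ → Y → Y) (ε : ℝ) (x : ℤ → Y) (z : Y) : Prop :=
  (∀ k : ℤ, dist (T k z) (x k) ≤ ε) ∧
  Tendsto (fun k : ℤ => dist (T k z) (x k)) (cocompact ℤ) (𝓝 0)

/-- the L-shadowing property -/
def LShadowing (T : ℤ → Y → Y) : Prop :=
  ∀ ε > (0:ℝ), ∃ δ > (0:ℝ), ∀ x : ℤ → Y, IsLimitPseudoOrbit T δ x → ∃ z, LimitShadows T ε x z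

/-- the shadowing property -/
def Shadowing (T : ℤ → Y → Y) : Prop :=
  ∀ ε > (0:ℝ), ∃ δ > (0:ℝ), ∀ x : ℤ → Y,
    (∀ k : ℤ, dist (T 1 (x k)) (x (k+1)) < δ) → ∃ z, ∀ k : ℤ, dist (T k z) (x k) < ε

/-- local c-stable set -/
def Ws (f : X ≃ₜ X) (c : ℝ) (x : X) : Set X :=
  {y | ∀ k : ℤ, 0 ≤ k → dist (F f k y) (F f k x) ≤ c}

/-- local c-unstable set -/
def Wu (f : X ≃ₜ X) (c : ℝ) (x : X) : Set X :=
  {y | ∀ k : ℤ, k ≤ 0 → dist (F f k y) (F f k x) ≤ c}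

/-- stable set -/
def WsA (f : X ≃ₜ X) (x : X) : Set X :=
  {y | Tendsto (fun k : ℤ => dist (F f k y) (F f k x)) atTop (𝓝 0)}

/-- unstable set -/
def WuA (f : X ≃ₜ X) (x : X) : Set X :=
  {y | Tendsto (fun k : ℤ => dist (F f k y) (F f k x)) atBot (𝓝 0)}

/-- asymptotic local stable set -/
def Vs (f : X ≃ₜ X) (c : ℝ) (x : X) : Set X := WsA f x ∩ Ws f c x

/-- asymptotic local unstable set -/
def Vu (f : X ≃ₜ X) (c : ℝ) (x : X) : Set X := WuA f x ∩ Wu f c x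

/-- image of a nonempty compact set under a homeomorphism -/
def himg (f : X ≃ₜ X) (A : NonemptyCompacts X) : NonemptyCompacts X :=
  ⟨⟨f '' A, A.isCompact.image f.continuous⟩, A.nonempty.image f⟩

/-- the `ℤ`-iteration family of the induced hyperspace map `2^f` -/
def HF (f : X ≃ₜ X) : ℤ → NonemptyCompacts X → NonemptyCompacts X :=
  fun k A => himg (hpow f k) A

end LS

/-!
Let `y` lie in the closure `K` of the `ε`-stable component of `x`, and suppose `f^k y` does not
approach `f^k x`. Take a cluster point `D` of the continua `f^k K` (`k → ∞`) in the compact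
hyperspace of nonempty compacta, whose Hausdorff-metric topology is the Vietoris topology. `D` is
connected, and for each `m` the sets `f^m (f^k K)` have diameter `≤ 2ε` as soon as `m + k ≥ 0`, so
`D ⊆ W^s_{2ε}(p) ∩ W^u_{2ε}(p)` for any `p ∈ D`; cw-expansivity makes `D` a point. Yet `D` contains
two points at distance at least the `δ` witnessing non-convergence. The unstable statement is the
stable one for `f⁻¹`.
-/

open Set

namespace TopologicalSpace.NonemptyCompacts

variable {X : Type*} [TopologicalSpace X]

lemma isClosed_setOf_isPreconnected [T4Space X] :
    IsClosed {K : NonemptyCompacts X | IsPreconnected (K : Set X)} := by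
  rw [← isOpen_compl_iff, isOpen_iff_forall_mem_open]
  intro K hK
  rw [mem_compl_iff, mem_ofPred_eq,
    isPreconnected_iff_subset_of_fully_disjoint_closed K.isCompact.isClosed] at hK
  push Not at hK
  obtain ⟨u, v, hu, hv, hKuv, huv, hKu, hKv⟩ := hK
  obtain ⟨U, V, hU, hV, huU, hvV, hUV⟩ := normal_separation hu hv huv
  refine ⟨{L | ↑L ⊆ U ∪ V} ∩ {L | (↑L ∩ U).Nonempty} ∩ {L | (↑L ∩ V).Nonempty}, ?_, ?_, ?_⟩
  · rintro L ⟨⟨hLUV, hLU⟩, hLV⟩ hL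
    obtain ⟨z, -, hzU, hzV⟩ := hL U V hU hV hLUV hLU hLV
    exact hUV.le_bot ⟨hzU, hzV⟩
  · exact ((isOpen_subsets_of_isOpen (hU.union hV)).inter
      (isOpen_inter_nonempty_of_isOpen hU)).inter (isOpen_inter_nonempty_of_isOpen hV)
  · obtain ⟨a, haK, hav⟩ := not_subset.mp hKv
    obtain ⟨b, hbK, hbu⟩ := not_subset.mp hKu
    refine ⟨⟨hKuv.trans (union_subset_union huU hvV), a, haK, huU ?_⟩, b, hbK, hvV ?_⟩
    · exact (hKuv haK).resolve_right hav
    · exact (hKuv hbK).resolve_left hbu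

lemma continuous_prod_self : Continuous fun K : NonemptyCompacts X => K ×ˢ K :=
  continuous_prod.comp (continuous_id.prodMk continuous_id)

lemma isClosed_setOf_prod_self_subset {T : Set (X × X)} (hT : IsClosed T) :
    IsClosed {K : NonemptyCompacts X | (K : Set X) ×ˢ (K : Set X) ⊆ T} :=
  (isClosed_subsets_of_isClosed hT).preimage continuous_prod_self

lemma isClosed_setOf_not_prod_self_subset {U : Set (X × X)} (hU : IsOpen U) :
    IsClosed {K : NonemptyCompacts X | ¬ (K : Set X) ×ˢ (K : Set X) ⊆ U} :=
  ((isOpen_subsets_of_isOpen hU).preimage continuous_prod_self).isClosed_compl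

end TopologicalSpace.NonemptyCompacts

namespace LS

section Iterates

variable {X : Type*} [MetricSpace X] (f : X ≃ₜ X)

lemma hpowAux_eq_pow (n : ℕ) : hpowAux f n = f ^ n := by
  induction n with
  | zero => rfl
  | succ n ih => rw [pow_succ', ← ih]; rfl

lemma F_eq_zpow (k : ℤ) : F f k = ⇑(f ^ k) := by
  cases k with
  | ofNat n => exact congrArg _ ((hpowAux_eq_pow f n).trans (zpow_natCast f n).symm)
  | negSucc n =>
    change ⇑(hpowAux f (n + 1))⁻¹ = _
    rw [hpowAux_eq_pow, zpow_negSucc]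

lemma symm_zpow_apply (k : ℤ) (y : X) : (f.symm ^ k) y = (f ^ (-k)) y := by
  rw [← inv_zpow']
  rfl

variable {f}

lemma mem_Ws {c : ℝ} {x y : X} :
    y ∈ Ws f c x ↔ ∀ k : ℤ, 0 ≤ k → dist ((f ^ k) y) ((f ^ k) x) ≤ c := by
  simp only [Ws, F_eq_zpow, mem_ofPred_eq]

lemma mem_Wu {c : ℝ} {x y : X} :
    y ∈ Wu f c x ↔ ∀ k : ℤ, k ≤ 0 → dist ((f ^ k) y) ((f ^ k) x) ≤ c := by
  simp only [Wu, F_eq_zpow, mem_ofPred_eq]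

lemma mem_WsA {x y : X} :
    y ∈ WsA f x ↔ Tendsto (fun k : ℤ => dist ((f ^ k) y) ((f ^ k) x)) atTop (𝓝 0) := by
  simp only [WsA, F_eq_zpow, mem_ofPred_eq]

lemma mem_WuA {x y : X} :
    y ∈ WuA f x ↔ Tendsto (fun k : ℤ => dist ((f ^ k) y) ((f ^ k) x)) atBot (𝓝 0) := by
  simp only [WuA, F_eq_zpow, mem_ofPred_eq]

lemma Ws_symm (c : ℝ) (x : X) : Ws f.symm c x = Wu f c x := by
  ext y
  simp only [mem_Ws, mem_Wu, symm_zpow_apply]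
  exact ⟨fun h k hk => by simpa using h (-k) (by omega), fun h k hk => h (-k) (by omega)⟩

lemma Wu_symm (c : ℝ) (x : X) : Wu f.symm c x = Ws f c x := by
  rw [← Ws_symm, Homeomorph.symm_symm]

lemma WsA_symm (x : X) : WsA f.symm x = WuA f x := by
  ext y
  simp only [mem_WsA, mem_WuA, symm_zpow_apply]
  exact ⟨fun h => by simpa only [Function.comp_def, neg_neg] using h.comp tendsto_neg_atBot_atTop,
    fun h => h.comp tendsto_neg_atTop_atBot⟩

lemma isClosed_Ws (c : ℝ) (x : X) : IsClosed (Ws f c x) := by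
  simp only [Ws, ofPred_forall]
  exact isClosed_iInter fun k => isClosed_iInter fun _ =>
    isClosed_le (((F_eq_zpow f k) ▸ (f ^ k).continuous).dist continuous_const) continuous_const

lemma Ws_subset_Ws_two_mul {ε : ℝ} {x w : X} (hw : w ∈ Ws f ε x) :
    Ws f ε x ⊆ Ws f (2 * ε) w := by
  intro z hz
  rw [mem_Ws] at hz hw ⊢
  intro k hk
  calc dist ((f ^ k) z) ((f ^ k) w)
      ≤ dist ((f ^ k) z) ((f ^ k) x) + dist ((f ^ k) w) ((f ^ k) x) := dist_triangle_right _ _ _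
    _ ≤ 2 * ε := by linarith [hz k hk, hw k hk]

end Iterates

section CwExpansive

variable {X : Type*} [MetricSpace X] {f : X ≃ₜ X} {c : ℝ}

lemma subset_Ws_inter_Wu_of_mapClusterPt {K D : NonemptyCompacts X}
    (hK : ∀ w ∈ K, (K : Set X) ⊆ Ws f c w)
    (hD : MapClusterPt D atTop fun k : ℤ => K.map (f ^ k) (f ^ k).continuous)
    {p : X} (hp : p ∈ D) : (D : Set X) ⊆ Ws f c p ∩ Wu f c p := by
  have hDD : ∀ m : ℤ,
      (D : Set X) ×ˢ (D : Set X) ⊆ {uv | dist ((f ^ m) uv.1) ((f ^ m) uv.2) ≤ c} := by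
    intro m
    refine (NonemptyCompacts.isClosed_setOf_prod_self_subset ?_).mem_of_mapClusterPt hD ?_
    · exact isClosed_le (by fun_prop) continuous_const
    · filter_upwards [eventually_ge_atTop (-m)] with k hk
      rintro ⟨_, _⟩ ⟨⟨z, hz, rfl⟩, ⟨w, hw, rfl⟩⟩
      rw [mem_ofPred_eq, ← Homeomorph.mul_apply, ← Homeomorph.mul_apply, ← zpow_add]
      exact mem_Ws.mp (hK w hw hz) (m + k) (by omega)
  exact fun u hu => ⟨mem_Ws.mpr fun m _ => hDD m (mk_mem_prod hu hp),
    mem_Wu.mpr fun m _ => hDD m (mk_mem_prod hu hp)⟩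

lemma mem_WsA_of_isPreconnected [CompactSpace X]
    (hcw : ∀ p, IsTotallyDisconnected (Ws f c p ∩ Wu f c p)) {K : NonemptyCompacts X}
    (hKc : IsPreconnected (K : Set X)) (hK : ∀ w ∈ K, (K : Set X) ⊆ Ws f c w)
    {x y : X} (hx : x ∈ K) (hy : y ∈ K) : y ∈ WsA f x := by
  rw [mem_WsA]
  by_contra hxy
  rw [Metric.tendsto_nhds] at hxy
  push Not at hxy
  obtain ⟨δ, hδ, hfreq⟩ := hxy
  have hfar : IsClosed
      {L : NonemptyCompacts X | ¬ (L : Set X) ×ˢ (L : Set X) ⊆ {uv | dist uv.1 uv.2 < δ}} :=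
    NonemptyCompacts.isClosed_setOf_not_prod_self_subset (isOpen_lt continuous_dist continuous_const)
  obtain ⟨D, hDfar, hD⟩ := hfar.isCompact.exists_mapClusterPt_of_frequently
    (f := fun k : ℤ => K.map (f ^ k) (f ^ k).continuous) <| hfreq.mono fun k hk hsub => by
      have := hsub (mk_mem_prod (mem_image_of_mem (f ^ k) hy) (mem_image_of_mem (f ^ k) hx))
      simp only [mem_ofPred_eq, Real.dist_0_eq_abs, abs_dist] at this hk
      exact hk.not_gt this
  have hDc : IsPreconnected (D : Set X) :=
    NonemptyCompacts.isClosed_setOf_isPreconnected.mem_of_mapClusterPt hD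
      (Eventually.of_forall fun k => hKc.image _ (f ^ k).continuous.continuousOn)
  obtain ⟨⟨u, v⟩, ⟨hu, hv⟩, huv⟩ := not_subset.mp hDfar
  have : u = v := hcw v _ (subset_Ws_inter_Wu_of_mapClusterPt hK hD hv) hDc hu hv
  simp only [this, mem_ofPred_eq, dist_self] at huv
  exact huv hδ

lemma connectedComponentIn_Ws_subset_WsA [CompactSpace X] {ε : ℝ}
    (hcw : ∀ p, IsTotallyDisconnected (Ws f (2 * ε) p ∩ Wu f (2 * ε) p)) (x : X) :
    connectedComponentIn (Ws f ε x) x ⊆ WsA f x := by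
  intro y hy
  have hx : x ∈ Ws f ε x := connectedComponentIn_nonempty_iff.mp ⟨y, hy⟩
  have hxC := mem_connectedComponentIn hx
  have hCW : closure (connectedComponentIn (Ws f ε x) x) ⊆ Ws f ε x :=
    closure_minimal (connectedComponentIn_subset _ _) (isClosed_Ws ε x)
  let K : NonemptyCompacts X := ⟨⟨_, isClosed_closure.isCompact⟩, x, subset_closure hxC⟩
  exact mem_WsA_of_isPreconnected (K := K) hcw isPreconnected_connectedComponentIn.closure
    (fun w hw => hCW.trans (Ws_subset_Ws_two_mul (hCW hw))) (subset_closure hxC) (subset_closure hy)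

lemma connectedComponentIn_Wu_subset_WuA [CompactSpace X] {ε : ℝ}
    (hcw : ∀ p, IsTotallyDisconnected (Ws f (2 * ε) p ∩ Wu f (2 * ε) p)) (x : X) :
    connectedComponentIn (Wu f ε x) x ⊆ WuA f x := by
  have hcw_symm : ∀ p, IsTotallyDisconnected (Ws f.symm (2 * ε) p ∩ Wu f.symm (2 * ε) p) := by
    simpa only [Ws_symm, Wu_symm, inter_comm] using hcw
  simpa only [Ws_symm, WsA_symm] using connectedComponentIn_Ws_subset_WsA hcw_symm x

end CwExpansive

end LS

theorem stmt_9_general {X : Type*} [MetricSpace X] [CompactSpace X] (f : X ≃ₜ X)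
    (ε : ℝ)
    (hcw : ∀ x : X, IsTotallyDisconnected (LS.Ws f (2*ε) x ∩ LS.Wu f (2*ε) x)) :
    ∀ x : X,
      connectedComponentIn (LS.Ws f ε x) x ⊆ LS.WsA f x ∧
      connectedComponentIn (LS.Wu f ε x) x ⊆ LS.WuA f x ∧
      connectedComponentIn (LS.Ws f ε x) x ⊆ LS.Vs f ε x ∧
      connectedComponentIn (LS.Wu f ε x) x ⊆ LS.Vu f ε x := by
  intro x
  have hs := LS.connectedComponentIn_Ws_subset_WsA hcw x
  have hu := LS.connectedComponentIn_Wu_subset_WuA hcw x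
  exact ⟨hs, hu, Set.subset_inter hs (connectedComponentIn_subset _ _),
    Set.subset_inter hu (connectedComponentIn_subset _ _)⟩

/-- for a cw-expansive homeomorphism with cw-expansivity constant `2ε`,
local stable/unstable continua are contained in the stable/unstable sets, hence in the
asymptotic local stable/unstable sets. -/
theorem stmt_9 {X : Type*} [MetricSpace X] [CompactSpace X] (f : X ≃ₜ X)
    (ε : ℝ) (hε : 0 < ε)
    (hcw : ∀ x : X, IsTotallyDisconnected (LS.Ws f (2*ε) x ∩ LS.Wu f (2*ε) x)) :
    ∀ x : X,
      connectedComponentIn (LS.Ws f ε x) x ⊆ LS.WsA f x ∧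
      connectedComponentIn (LS.Wu f ε x) x ⊆ LS.WuA f x ∧
      connectedComponentIn (LS.Ws f ε x) x ⊆ LS.Vs f ε x ∧
      connectedComponentIn (LS.Wu f ε x) x ⊆ LS.Vu f ε x :=
  stmt_9_general f ε hcw
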